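/- arXiv:1905.02591 — 5 statements merged into one kernel-verified Lean document; each statement's English description precedes it below -/
import Mathlib

section
/- If A ⊆ ℕ contains arithmetic progressions of arbitrary finite length, then for every l ∈ ℕ, the set B = {(a, b) ∈ ℕ × ℕ : b ≠ 0 and a + i*b ∈ A for all 0 ≤ i ≤ l} contains arithmetic progressions of arbitrary finite length in the additive semigroup ℕ × ℕ; i.e., for every m there exist (c,d), (e,f) ∈ ℕ × ℕ with (e,f) ≠ (0,0) such that (c,d) + i*(e,f) ∈ B for all 0 ≤ i ≤ m. -/
theorem stmt0 (A : Set ℕ)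
    (hA : ∀ k : ℕ, ∃ a b : ℕ, b ≠ 0 ∧ ∀ i ≤ k, a + i * b ∈ A) (l : ℕ) :
    ∀ m : ℕ, ∃ x y : ℕ × ℕ, y ≠ (0, 0) ∧
      ∀ i ≤ m, (x + i • y) ∈ {p : ℕ × ℕ | p.2 ≠ 0 ∧ ∀ j ≤ l, p.1 + j * p.2 ∈ A} := by
  intro m
  obtain ⟨a, b, hb, h⟩ := hA ((m + 1) * (l + 1))
  refine ⟨(a, b), ((l + 1) * b, 0), ?_, ?_⟩
  · simp [Prod.ext_iff, hb]
  · intro i hi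
    constructor
    · simpa using hb
    · intro j hj
      have : (a, b).1 + i • ((l + 1) * b, 0).1 + j * b = a + (i * (l + 1) + j) * b := by
        simp; ring
      simp only [Prod.fst_add, Prod.snd_add, Prod.smul_mk, smul_eq_mul, smul_zero]
      have hle : i * (l + 1) + j ≤ (m + 1) * (l + 1) := by
        calc i * (l + 1) + j ≤ m * (l + 1) + l := by
              exact Nat.add_le_add (Nat.mul_le_mul_right _ hi) hj
          _ ≤ (m + 1) * (l + 1) := by nlinarith
      have heq : a + i * ((l + 1) * b) + j * (b + i * 0) =
          a + (i * (l + 1) + j) * b := by ring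
      rw [heq]
      exact h _ hle
end

section
/- If A ⊆ ℕ is AP-rich, then for every l ∈ ℕ the set A^{l+1} ∩ AP_{l+1} ⊆ ℕ^{l+1} is AP-rich: for every m there exist x, y ∈ ℕ^{l+1} with y ≠ 0 such that x + i•y ∈ A^{l+1} ∩ AP_{l+1} for all 0 ≤ i ≤ m. -/
theorem stmt4 (A : Set ℕ)
    (hA : ∀ k : ℕ, ∃ a b : ℕ, b ≠ 0 ∧ ∀ i ≤ k, a + i * b ∈ A) (l : ℕ) :
    ∀ m : ℕ, ∃ x y : Fin (l + 1) → ℕ, y ≠ 0 ∧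
      ∀ i ≤ m, (∀ j : Fin (l + 1), (x + i • y) j ∈ A) ∧
        ∃ a b : ℕ, ∀ j : Fin (l + 1), (x + i • y) j = a + (j : ℕ) * b := by
  intro m
  obtain ⟨a, b, hb, hmem⟩ := hA (l + m * (l + 1))
  refine ⟨fun j => a + (j : ℕ) * b, fun _ => (l + 1) * b, ?_, ?_⟩
  · intro h
    have := congrFun h 0
    simp at this
    exact hb this
  · intro i hi
    constructor
    · intro j
      have heq : ((fun j : Fin (l+1) => a + (j : ℕ) * b) + i • fun _ : Fin (l+1) => (l + 1) * b) j
          = a + ((j : ℕ) + i * (l + 1)) * b := by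
        simp [Pi.add_apply, Pi.smul_apply, smul_eq_mul]
        ring
      rw [heq]
      apply hmem
      have hj : (j : ℕ) ≤ l := Nat.lt_succ_iff.mp j.isLt
      have : i * (l + 1) ≤ m * (l + 1) := Nat.mul_le_mul_right _ hi
      omega
    · refine ⟨a + i * (l + 1) * b, b, fun j => ?_⟩
      simp [Pi.add_apply, Pi.smul_apply, smul_eq_mul]
      ring
end

section
/- In any commutative semigroup S (written additively), if A ⊆ S contains for every k an element a and an element b with a + i·b ∈ A for all 1 ≤ i ≤ k (where i·b denotes the i-fold sum of b), then for each fixed l, the set B = {(a,b) ∈ S × S : a + i·b ∈ A for all 1 ≤ i ≤ l} has the property that for every m there exist (c,d) ∈ S × S with (c,d) + i·(d,d) ∈ B for all 1 ≤ i ≤ m. -/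
/-- `itSMul n b` is the `(n+1)`-fold sum of `b`, so `i·b = itSMul (i-1) b` for `i ≥ 1`. -/
def itSMul {S : Type*} [Add S] : ℕ → S → S
  | 0, b => b
  | n + 1, b => itSMul n b + b

lemma itSMul_prod {S : Type*} [Add S] (n : ℕ) (x y : S) :
    itSMul n ((x, y) : S × S) = (itSMul n x, itSMul n y) := by
  induction n with
  | zero => rfl
  | succ n ih => simp [itSMul, ih, Prod.add_def]

lemma itSMul_add {S : Type*} [AddCommSemigroup S] (n m : ℕ) (d : S) :
    itSMul n d + itSMul m d = itSMul (n + m + 1) d := by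
  induction m with
  | zero => rfl
  | succ m ih =>
    show itSMul n d + (itSMul m d + d) = _
    rw [← add_assoc, ih]
    rfl

lemma itSMul_itSMul {S : Type*} [AddCommSemigroup S] (n m : ℕ) (d : S) :
    itSMul n (itSMul m d) = itSMul (n * m + n + m) d := by
  induction n with
  | zero => simp [itSMul]
  | succ n ih =>
    show itSMul n (itSMul m d) + itSMul m d = _
    rw [ih, itSMul_add]
    ring_nf

theorem stmt5 {S : Type*} [AddCommSemigroup S] (A : Set S)
    (hA : ∀ k : ℕ, ∃ a b : S, ∀ i : ℕ, 1 ≤ i → i ≤ k → a + itSMul (i - 1) b ∈ A)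
    (l : ℕ) :
    ∀ m : ℕ, ∃ c d : S, ∀ i : ℕ, 1 ≤ i → i ≤ m →
      ((c, d) + itSMul (i - 1) ((d, d) : S × S)) ∈
        {p : S × S | ∀ j : ℕ, 1 ≤ j → j ≤ l → p.1 + itSMul (j - 1) p.2 ∈ A} := by
  intro m
  obtain ⟨a, b, hab⟩ := hA (m + l * (m + 1))
  refine ⟨a, b, fun i hi1 him => ?_⟩
  intro j hj1 hjl
  obtain ⟨i, rfl⟩ : ∃ i', i = i' + 1 := ⟨i - 1, by omega⟩
  obtain ⟨j, rfl⟩ : ∃ j', j = j' + 1 := ⟨j - 1, by omega⟩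
  rw [itSMul_prod]
  simp only [Prod.add_def, Prod.fst, Prod.snd, Nat.add_sub_cancel]
  have hsnd : b + itSMul i b = itSMul (i + 1) b := by
    rw [add_comm]; rfl
  rw [hsnd, itSMul_itSMul, add_assoc, itSMul_add]
  have hp : (j + 1) * (i + 2) = j * i + 2 * j + i + 2 := by ring
  have key : i + (j * (i + 1) + j + (i + 1)) + 1 = ((i + 1) + (j + 1) * (i + 2)) - 1 := by
    have hq : j * (i + 1) = j * i + j := by ring
    omega
  rw [key]
  have h1 : (j + 1) * (i + 2) ≤ l * (m + 1) :=
    Nat.mul_le_mul hjl (by omega)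
  exact hab _ (by omega) (by omega)
end

section
/- Every piecewise syndetic subset of ℕ is AP-rich: if A ⊆ ℕ is piecewise syndetic, then A contains arithmetic progressions of every finite length. -/
theorem stmt7 (A : Set ℕ)
    (hPS : ∃ d : ℕ, 1 ≤ d ∧ ∀ N : ℕ, ∃ x : ℕ,
      ∀ y : ℕ, x ≤ y → y < x + N → ∃ a ∈ A, y ≤ a ∧ a < y + d) :
    ∀ k : ℕ, ∃ a b : ℕ, b ≠ 0 ∧ ∀ i ≤ k, a + i * b ∈ A := by
  classical
  obtain ⟨d, hd, hA⟩ := hPS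
  intro k
  -- Hales–Jewett
  obtain ⟨ι, _inst, hHJ⟩ :=
    Combinatorics.Line.exists_mono_in_high_dimension (Fin (k + 1)) (Fin d)
  set N : ℕ := Fintype.card ι * k + 1 with hN
  obtain ⟨x, hx⟩ := hA N
  let f : ℕ → ℕ := fun y => if h : ∃ a, a ∈ A ∧ y ≤ a ∧ a < y + d then h.choose else 0
  have hf : ∀ y, (∃ a, a ∈ A ∧ y ≤ a ∧ a < y + d) → f y ∈ A ∧ y ≤ f y ∧ f y < y + d := by
    intro y h
    simpa [f, dif_pos h] using h.choose_spec
  clear_value f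
  let C : (ι → Fin (k + 1)) → Fin d := fun v =>
    ⟨(f (x + ∑ j, (v j : ℕ)) - (x + ∑ j, (v j : ℕ))) % d, Nat.mod_lt _ hd⟩
  obtain ⟨l, c, hc⟩ := hHJ C
  -- decompose the line sum
  set m : ℕ := (Finset.univ.filter (fun j : ι => l.idxFun j = none)).card with hm
  set S : ℕ := ∑ j, ((l 0) j : ℕ) with hS
  have hsum : ∀ t : Fin (k + 1), (∑ j, ((l t) j : ℕ)) = S + m * (t : ℕ) := by
    intro t
    have h1 : ∀ j : ι, ((l t) j : ℕ) =
        ((l 0) j : ℕ) + (if l.idxFun j = none then (t : ℕ) else 0) := by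
      intro j
      rcases h : l.idxFun j with _ | a <;>
        simp [Combinatorics.Line.coe_apply, h]
    rw [Finset.sum_congr rfl fun j _ => h1 j, Finset.sum_add_distrib]
    simp [Finset.sum_ite, hm, hS, mul_comm]
  have hm1 : 1 ≤ m := by
    obtain ⟨j, hj⟩ := l.proper
    refine Finset.card_pos.mpr ⟨j, ?_⟩
    simp [hj]
  -- bound on positions
  have hbound : ∀ t : Fin (k + 1), S + m * (t : ℕ) ≤ Fintype.card ι * k := by
    intro t
    rw [← hsum t]
    calc (∑ j, ((l t) j : ℕ)) ≤ ∑ _j : ι, k :=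
          Finset.sum_le_sum fun j _ => Nat.lt_succ_iff.mp ((l t) j).isLt
      _ = Fintype.card ι * k := by simp [mul_comm]
  -- positions are good
  have hgoodpos : ∀ t : Fin (k + 1),
      ∃ a, a ∈ A ∧ x + S + m * (t : ℕ) ≤ a ∧ a < x + S + m * (t : ℕ) + d := by
    intro t
    have h2 : x + S + m * (t : ℕ) < x + N := by
      have := hbound t
      omega
    obtain ⟨a, ha, h3, h4⟩ := hx (x + S + m * (t : ℕ)) (by omega) h2
    exact ⟨a, ha, h3, h4⟩
  -- monochromaticity: each good position's offset equals c
  refine ⟨x + S + (c : ℕ), m, by omega, ?_⟩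
  intro i hi
  set t : Fin (k + 1) := ⟨i, by omega⟩ with ht
  have hy : ∃ a, a ∈ A ∧ x + S + m * i ≤ a ∧ a < x + S + m * i + d := by
    have h2 : x + S + m * i < x + N := by
      have hb := hbound t
      have htv : (t : ℕ) = i := rfl
      rw [htv] at hb
      omega
    obtain ⟨a, ha, h3, h4⟩ := hx (x + S + m * i) (by omega) h2
    exact ⟨a, ha, h3, h4⟩
  obtain ⟨hfA, hfle, hflt⟩ := hf _ hy
  have hsum' : x + ∑ j, ((l t) j : ℕ) = x + S + m * i := by
    rw [hsum t]
    have htv : (t : ℕ) = i := rfl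
    rw [htv]
    omega
  have hcv : (f (x + S + m * i) - (x + S + m * i)) % d = (c : ℕ) := by
    have h5 := congrArg Fin.val (hc t)
    simp only [C] at h5
    rw [hsum'] at h5
    exact h5
  have hlt : f (x + S + m * i) - (x + S + m * i) < d := by omega
  rw [Nat.mod_eq_of_lt hlt] at hcv
  have hfeq : f (x + S + m * i) = x + S + (c : ℕ) + m * i := by omega
  rw [mul_comm i m, ← hfeq]
  exact hfA
end

section
/- For A ⊆ ℕ AP-rich and l ∈ ℕ, the set B = {(a,b) : b ≥ 1, a + i*b ∈ A for 0 ≤ i ≤ l} contains, for every m, an AP of length m+1 whose common difference is of the diagonal form (d, d) with d ≥ 1. -/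
theorem stmt16 (A : Set ℕ)
    (hA : ∀ k : ℕ, ∃ a b : ℕ, 1 ≤ b ∧ ∀ i ≤ k, a + i * b ∈ A) (l : ℕ) :
    ∀ m : ℕ, ∃ x : ℕ × ℕ, ∃ d : ℕ, 1 ≤ d ∧
      ∀ i ≤ m, (x + i • ((d, d) : ℕ × ℕ)) ∈
        {p : ℕ × ℕ | 1 ≤ p.2 ∧ ∀ j ≤ l, p.1 + j * p.2 ∈ A} := by
  intro m
  obtain ⟨a, b, hb, h⟩ := hA (m + (m + 1) * l)
  refine ⟨(a, b), b, hb, ?_⟩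
  intro i hi
  constructor
  · simp only [Prod.snd_add, smul_eq_mul]
    omega
  · intro j hj
    have key : (a + i * b) + j * (b + i * b) = a + (i + j * (i + 1)) * b := by ring
    simp only [Prod.fst_add, Prod.snd_add, Prod.smul_mk, smul_eq_mul]
    rw [show a + i * b + j * (b + i * b) = a + (i + j * (i + 1)) * b by ring]
    exact h _ (by nlinarith)
end
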